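/- For any elements x, y of a Coxeter group W, the Demazure product x ∗ y equals the unique maximal element (in Bruhat order) of the set {uv : u ≤ x, v ≤ y}. -/

import Mathlib

/-!
Write `x` and `y` as reduced words `ω` and `τ`. By associativity, `x ∗ y` is the Demazure
product of the letters of `ω ++ τ`; reading that word from the right and multiplying by a letter
only when it increases the length picks out a subword whose product is `x ∗ y`, so `x ∗ y` lies
in the set. Conversely, the lifting property (`u ≤ w` implies `s u ≤ s ∗ w`) shows by
induction on the word that every subword product of `ω ++ τ` lies below its Demazure product,
and by the subword property every `u v` with `u ≤ x`, `v ≤ y` is such a product. Antisymmetry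
gives uniqueness.

The lifting and subword properties come from the strong exchange condition, proved with the
reflection cocycle: the parity of the number of occurrences of a reflection `t` in the right
inversion sequence of a word for `w` depends only on `w`, since it is read off from an action of
`W` on `W × ZMod 2` built from the Coxeter presentation.
-/

/-- The Bruhat order on a Coxeter group, via the subword property: `x ≤ y` iff some
reduced word for `y` has a subword whose product is `x`. -/
def CoxeterSystem.bruhatLE {B W : Type*} [Group W] {M : CoxeterMatrix B}
    (cs : CoxeterSystem M W) (x y : W) : Prop :=
  ∃ ω ω' : List B, cs.IsReduced ω ∧ cs.wordProd ω = y ∧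
    List.Sublist ω' ω ∧ cs.wordProd ω' = x

/-- The set of products `u * v` with `u ≤ x` and `v ≤ y` in the Bruhat order. -/
def CoxeterSystem.prodSet {B W : Type*} [Group W] {M : CoxeterMatrix B}
    (cs : CoxeterSystem M W) (x y : W) : Set W :=
  {w | ∃ u v : W, cs.bruhatLE u x ∧ cs.bruhatLE v y ∧ w = u * v}

namespace CoxeterSystem

variable {B W : Type*} [Group W] {M : CoxeterMatrix B} (cs : CoxeterSystem M W)

open scoped List

local prefix:100 "σ" => cs.simple
local prefix:100 "π" => cs.wordProd
local prefix:100 "ℓ" => cs.length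
local prefix:100 "ris" => cs.rightInvSeq

section InversionParity

theorem simple_mul_mul_simple_eq_simple_iff (i : B) (t : W) :
    σ i * t * σ i = σ i ↔ t = σ i := by
  constructor
  · intro h
    simpa [mul_assoc] using congrArg (σ i * · * σ i) h
  · rintro rfl
    simp

open scoped Classical in
noncomputable def reflectionPerm (i : B) : Equiv.Perm (W × ZMod 2) :=
  Function.Involutive.toPerm (fun p => (σ i * p.1 * σ i, p.2 + if p.1 = σ i then 1 else 0)) <| by
    rintro ⟨t, e⟩
    simp only [simple_mul_mul_simple_eq_simple_iff, Prod.mk.injEq]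
    refine ⟨by simp [mul_assoc], ?_⟩
    rw [add_assoc, CharTwo.add_self_eq_zero, add_zero]

open scoped Classical in
theorem reflectionPerm_apply (i : B) (t : W) (e : ZMod 2) :
    cs.reflectionPerm i (t, e) = (σ i * t * σ i, e + if t = σ i then 1 else 0) :=
  rfl

open scoped Classical in
theorem reflectionPerm_mul_pow_apply (i j : B) (k : ℕ) (t : W) (e : ZMod 2) :
    ((cs.reflectionPerm i * cs.reflectionPerm j) ^ k) (t, e) =
      ((σ i * σ j) ^ k * t * (σ j * σ i) ^ k,
        e + ∑ r ∈ Finset.range (2 * k), if (σ j * σ i) ^ r * σ j = t then 1 else 0) := by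
  induction k with
  | zero => simp
  | succ k ih =>
    have hinv : ((σ i * σ j) ^ k)⁻¹ = (σ j * σ i) ^ k := by simp [← inv_pow]
    have hsemi : σ j * (σ i * σ j) ^ k = (σ j * σ i) ^ k * σ j :=
      (SemiconjBy.pow_right (by simp [SemiconjBy, mul_assoc]) k : SemiconjBy _ _ _).eq
    have conj_eq_iff : ∀ x, (σ i * σ j) ^ k * t * (σ j * σ i) ^ k = x ↔
        (σ j * σ i) ^ k * x * (σ i * σ j) ^ k = t := by
      intro x
      rw [← hinv]
      constructor <;> rintro rfl <;> group
    have h_even : (σ i * σ j) ^ k * t * (σ j * σ i) ^ k = σ j ↔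
        (σ j * σ i) ^ (2 * k) * σ j = t := by
      rw [conj_eq_iff, mul_assoc, hsemi, ← mul_assoc, ← pow_add, two_mul]
    have h_odd : σ j * ((σ i * σ j) ^ k * t * (σ j * σ i) ^ k) * σ j = σ i ↔
        (σ j * σ i) ^ (2 * k + 1) * σ j = t := by
      have hconj : ∀ x, σ j * x * σ j = σ i ↔ x = σ j * σ i * σ j := by
        intro x
        constructor
        · intro h
          simp [← h, mul_assoc]
        · rintro rfl
          simp [mul_assoc]
      rw [hconj, conj_eq_iff]
      calc (σ j * σ i) ^ k * (σ j * σ i * σ j) * (σ i * σ j) ^ k = t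
          ↔ (σ j * σ i) ^ k * (σ j * σ i) * (σ j * (σ i * σ j) ^ k) = t := by
            simp only [mul_assoc]
        _ ↔ _ := by rw [hsemi, ← pow_succ, ← mul_assoc, ← pow_add, two_mul, add_right_comm]
    rw [pow_succ', Equiv.Perm.mul_apply, Equiv.Perm.mul_apply, ih, reflectionPerm_apply,
      reflectionPerm_apply, if_congr h_even rfl rfl, if_congr h_odd rfl rfl,
      show 2 * (k + 1) = 2 * k + 1 + 1 by ring, Finset.sum_range_succ, Finset.sum_range_succ]
    refine Prod.ext ?_ ?_
    · dsimp only
      rw [pow_succ', pow_succ]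
      group
    · dsimp only
      ring

theorem isLiftable_reflectionPerm : M.IsLiftable cs.reflectionPerm := by
  classical
  intro i j
  ext ⟨t, e⟩ : 1
  rw [reflectionPerm_mul_pow_apply, Equiv.Perm.one_apply, cs.simple_mul_simple_pow,
    cs.simple_mul_simple_pow', one_mul, mul_one, two_mul, Finset.sum_range_add]
  have h_period : ∀ r, (if (σ j * σ i) ^ (M i j + r) * σ j = t then (1 : ZMod 2) else 0) =
      if (σ j * σ i) ^ r * σ j = t then 1 else 0 := fun r => by
    rw [pow_add, cs.simple_mul_simple_pow', one_mul]
  rw [Finset.sum_congr rfl fun r _ => h_period r, CharTwo.add_self_eq_zero, add_zero]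

noncomputable def reflectionRep : W →* Equiv.Perm (W × ZMod 2) :=
  cs.lift ⟨cs.reflectionPerm, cs.isLiftable_reflectionPerm⟩

open scoped Classical in
theorem reflectionRep_wordProd (ω : List B) (t : W) (e : ZMod 2) :
    cs.reflectionRep (π ω) (t, e) = (π ω * t * (π ω)⁻¹, e + (ris ω).count t) := by
  induction ω generalizing e with
  | nil => simp
  | cons i ω ih =>
    have hcond : π ω * t * (π ω)⁻¹ = σ i ↔ (π ω)⁻¹ * σ i * π ω = t := by
      constructor
      · intro h
        simp [← h, mul_assoc]
      · rintro rfl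
        group
    rw [cs.wordProd_cons, map_mul, Equiv.Perm.mul_apply, ih, reflectionRep,
      cs.lift_apply_simple, reflectionPerm_apply, if_congr hcond rfl rfl]
    refine Prod.ext ?_ ?_
    · simp [mul_assoc]
    · simp [rightInvSeq, List.count_cons, add_assoc]

noncomputable def inversionParity (w t : W) : ZMod 2 :=
  (cs.reflectionRep w (t, 0)).2

open scoped Classical in
theorem inversionParity_wordProd (ω : List B) (t : W) :
    cs.inversionParity (π ω) t = (ris ω).count t := by
  simp [inversionParity, reflectionRep_wordProd]

theorem reflectionRep_apply (w t : W) (e : ZMod 2) :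
    cs.reflectionRep w (t, e) = (w * t * w⁻¹, e + cs.inversionParity w t) := by
  classical
  obtain ⟨ω, rfl⟩ := cs.wordProd_surjective w
  rw [reflectionRep_wordProd, inversionParity_wordProd]

theorem inversionParity_mul (v w t : W) :
    cs.inversionParity (v * w) t =
      cs.inversionParity w t + cs.inversionParity v (w * t * w⁻¹) := by
  rw [inversionParity, map_mul, Equiv.Perm.mul_apply, reflectionRep_apply _ w,
    reflectionRep_apply _ v, zero_add]

theorem inversionParity_one (t : W) : cs.inversionParity 1 t = 0 := by
  simp [inversionParity]

theorem inversionParity_simple (i : B) : cs.inversionParity (σ i) (σ i) = 1 := by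
  classical
  simpa [rightInvSeq] using cs.inversionParity_wordProd [i] (σ i)

variable {cs} in
theorem IsReflection.inversionParity_self {t : W} (ht : cs.IsReflection t) :
    cs.inversionParity t t = 1 := by
  obtain ⟨p, i, rfl⟩ := ht
  have h_conj : p⁻¹ * (p * σ i * p⁻¹) * p⁻¹⁻¹ = σ i := by group
  have h_split := cs.inversionParity_mul (p * σ i) p⁻¹ (p * σ i * p⁻¹)
  have h_simple := cs.inversionParity_mul p (σ i) (σ i)
  have h_cancel := cs.inversionParity_mul p p⁻¹ (p * σ i * p⁻¹)
  rw [h_conj] at h_split h_cancel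
  rw [mul_inv_cancel, inversionParity_one] at h_cancel
  rw [cs.inversionParity_simple, inv_simple, simple_mul_simple_self, one_mul] at h_simple
  rw [h_split, h_simple]
  linear_combination -h_cancel

theorem mem_rightInvSeq_of_inversionParity_ne_zero {ω : List B} {t : W}
    (h : cs.inversionParity (π ω) t ≠ 0) : t ∈ ris ω := by
  classical
  rw [inversionParity_wordProd] at h
  by_contra h_not_mem
  exact h (by rw [List.count_eq_zero_of_not_mem h_not_mem, Nat.cast_zero])

variable {cs} in
theorem IsRightInversion.mem_rightInvSeq {ω : List B} {t : W}
    (ht : cs.IsRightInversion (π ω) t) : t ∈ ris ω := by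
  refine cs.mem_rightInvSeq_of_inversionParity_ne_zero fun h_zero => ?_
  obtain ⟨τ, hτ, hτ_eq⟩ := cs.exists_isReduced (π ω * t)
  have h_parity : cs.inversionParity (π τ) t = 1 := by
    rw [← hτ_eq, inversionParity_mul, ht.1.inversionParity_self, mul_inv_cancel_right, h_zero,
      add_zero]
  have h_mem := cs.mem_rightInvSeq_of_inversionParity_ne_zero (h_parity ▸ one_ne_zero)
  have h_lt := (cs.isRightInversion_of_mem_rightInvSeq hτ h_mem).2
  rw [← hτ_eq, mul_assoc, ht.1.mul_self, mul_one] at h_lt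
  exact lt_asymm ht.2 h_lt

variable {cs} in
/-- The strong exchange condition. -/
theorem IsRightInversion.exists_eraseIdx {ω : List B} {t : W}
    (ht : cs.IsRightInversion (π ω) t) : ∃ j < ω.length, π ω * t = π (ω.eraseIdx j) := by
  obtain ⟨j, hj, rfl⟩ := List.mem_iff_getElem.mp ht.mem_rightInvSeq
  refine ⟨j, by simpa using hj, ?_⟩
  rw [← List.getD_eq_getElem _ 1 hj, wordProd_mul_getD_rightInvSeq]

end InversionParity

section BruhatChain

def BruhatStep (u v : W) : Prop :=
  ∃ t, cs.IsRightInversion v t ∧ u = v * t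

def BruhatChain : W → W → Prop :=
  Relation.ReflTransGen cs.BruhatStep

noncomputable def simpleDemazure (i : B) (w : W) : W :=
  if ℓ w < ℓ (σ i * w) then σ i * w else w

theorem simpleDemazure_of_length_lt {i : B} {w : W} (h : ℓ w < ℓ (σ i * w)) :
    cs.simpleDemazure i w = σ i * w :=
  if_pos h

theorem simpleDemazure_of_length_gt {i : B} {w : W} (h : ℓ (σ i * w) < ℓ w) :
    cs.simpleDemazure i w = w :=
  if_neg (not_lt.2 h.le)

theorem length_lt_or_gt_simple_mul (i : B) (w : W) :
    ℓ w < ℓ (σ i * w) ∨ ℓ (σ i * w) < ℓ w :=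
  lt_or_gt_of_ne (cs.length_simple_mul_ne w i).symm

theorem bruhatStep_simple_mul {i : B} {w : W} (h : ℓ w < ℓ (σ i * w)) :
    cs.BruhatStep w (σ i * w) := by
  refine ⟨w⁻¹ * σ i * w, ⟨?_, ?_⟩, ?_⟩
  · simpa using (cs.isReflection_simple i).conj w⁻¹
  · simpa [mul_assoc] using h
  · simp [mul_assoc]

theorem bruhatStep_of_length_simple_mul_lt {i : B} {w : W} (h : ℓ (σ i * w) < ℓ w) :
    cs.BruhatStep (σ i * w) w := by
  simpa using cs.bruhatStep_simple_mul (i := i) (w := σ i * w) (by simpa using h)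

theorem bruhatStep_eraseIdx {ω : List B} (hω : cs.IsReduced ω) {j : ℕ} (hj : j < ω.length) :
    cs.BruhatStep (π (ω.eraseIdx j)) (π ω) := by
  have hj' : j < (ris ω).length := by simpa using hj
  refine ⟨(ris ω)[j], cs.isRightInversion_of_mem_rightInvSeq hω (List.getElem_mem hj'), ?_⟩
  rw [← List.getD_eq_getElem _ 1 hj', wordProd_mul_getD_rightInvSeq]

theorem bruhatChain_simpleDemazure (i : B) (w : W) :
    cs.BruhatChain w (cs.simpleDemazure i w) := by
  rcases cs.length_lt_or_gt_simple_mul i w with h | h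
  · rw [simpleDemazure_of_length_lt cs h]
    exact .single (cs.bruhatStep_simple_mul h)
  · rw [simpleDemazure_of_length_gt cs h]
    exact .refl

variable {cs}

theorem BruhatStep.length_lt {u v : W} (h : cs.BruhatStep u v) : ℓ u < ℓ v := by
  obtain ⟨t, ht, rfl⟩ := h
  exact ht.2

theorem BruhatChain.length_le {u v : W} (h : cs.BruhatChain u v) : ℓ u ≤ ℓ v := by
  induction h with
  | refl => exact le_rfl
  | tail _ h_step ih => exact ih.trans h_step.length_lt.le

theorem BruhatChain.antisymm {u v : W} (h : cs.BruhatChain u v) (h' : cs.BruhatChain v u) :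
    u = v := by
  rcases Relation.ReflTransGen.cases_tail h with rfl | ⟨w, huw, hwv⟩
  · rfl
  · exact absurd h'.length_le (not_le.2 ((BruhatChain.length_le huw).trans_lt hwv.length_lt))

theorem BruhatStep.simple_mul {u v : W} (h : cs.BruhatStep u v) {i : B}
    (hv : ℓ v < ℓ (σ i * v)) : cs.BruhatStep (σ i * u) (σ i * v) := by
  obtain ⟨t, ⟨ht, h_lt⟩, rfl⟩ := h
  refine ⟨t, ⟨ht, ?_⟩, (mul_assoc _ _ _).symm⟩
  rw [mul_assoc]
  rcases cs.length_simple_mul (v * t) i with h | h <;>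
    rcases cs.length_simple_mul v i with h' | h' <;> omega

theorem BruhatStep.simple_mul_bruhatChain {u v : W} (h : cs.BruhatStep u v) {i : B}
    (hv : ℓ (σ i * v) < ℓ v) : cs.BruhatChain (σ i * u) v := by
  obtain ⟨t, ht, rfl⟩ := h
  obtain ⟨τ, hτ, hτ_eq⟩ := cs.exists_isReduced (σ i * v)
  have h_word : π (i :: τ) = v := by rw [wordProd_cons, ← hτ_eq, simple_mul_simple_cancel_left]
  rw [← h_word] at ht
  -- strong exchange: `v * t` omits one letter of the word `i :: τ` for `v`
  obtain ⟨j, hj, h_exch⟩ := ht.exists_eraseIdx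
  rw [h_word] at h_exch
  rw [h_exch]
  cases j with
  | zero =>
    rw [List.eraseIdx_cons_zero, ← hτ_eq, simple_mul_simple_cancel_left]
    exact .refl
  | succ j =>
    rw [List.eraseIdx_cons_succ, wordProd_cons, simple_mul_simple_cancel_left]
    have h_last := cs.bruhatStep_of_length_simple_mul_lt (i := i) (w := v) hv
    rw [hτ_eq] at h_last
    exact .tail (.single (cs.bruhatStep_eraseIdx hτ (by simpa using hj))) h_last

/-- The lifting property, phrased with the Demazure action of a simple reflection. -/
theorem BruhatChain.simple_mul_simpleDemazure {u v : W} (h : cs.BruhatChain u v) (i : B) :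
    cs.BruhatChain (σ i * u) (cs.simpleDemazure i v) := by
  induction h with
  | refl =>
    rcases cs.length_lt_or_gt_simple_mul i u with hu | hu
    · rw [simpleDemazure_of_length_lt cs hu]
      exact .refl
    · rw [simpleDemazure_of_length_gt cs hu]
      exact .single (cs.bruhatStep_of_length_simple_mul_lt hu)
  | @tail v' v _ h_step ih =>
    rcases cs.length_lt_or_gt_simple_mul i v with hv | hv
    · rw [simpleDemazure_of_length_lt cs hv]
      rcases cs.length_lt_or_gt_simple_mul i v' with hv' | hv'
      · rw [simpleDemazure_of_length_lt cs hv'] at ih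
        exact ih.tail (h_step.simple_mul hv)
      · rw [simpleDemazure_of_length_gt cs hv'] at ih
        exact (ih.tail h_step).tail (cs.bruhatStep_simple_mul hv)
    · rw [simpleDemazure_of_length_gt cs hv]
      rcases cs.length_lt_or_gt_simple_mul i v' with hv' | hv'
      · rw [simpleDemazure_of_length_lt cs hv'] at ih
        exact ih.trans (h_step.simple_mul_bruhatChain hv)
      · rw [simpleDemazure_of_length_gt cs hv'] at ih
        exact ih.tail h_step

theorem IsReduced.of_cons {i : B} {ω : List B} (h : cs.IsReduced (i :: ω)) : cs.IsReduced ω := by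
  simpa using h.drop 1

theorem IsReduced.length_lt_simple_mul {i : B} {ω : List B} (h : cs.IsReduced (i :: ω)) :
    ℓ (π ω) < ℓ (σ i * π ω) := by
  rw [← wordProd_cons, h.eq, h.of_cons.eq, List.length_cons]
  exact Nat.lt_succ_self _

variable (cs) in
theorem bruhatChain_of_sublist {ω' ω : List B} (h : ω' <+ ω) (hω : cs.IsReduced ω) :
    cs.BruhatChain (π ω') (π ω) := by
  induction h with
  | slnil => exact .refl
  | cons i _ ih =>
    rw [wordProd_cons]
    exact (ih hω.of_cons).tail (cs.bruhatStep_simple_mul hω.length_lt_simple_mul)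
  | cons_cons i _ ih =>
    rw [wordProd_cons, wordProd_cons, ← simpleDemazure_of_length_lt cs hω.length_lt_simple_mul]
    exact (ih hω.of_cons).simple_mul_simpleDemazure i

theorem BruhatChain.exists_sublist {u : W} {ω : List B} (h : cs.BruhatChain u (π ω)) :
    ∃ ω', ω' <+ ω ∧ π ω' = u := by
  generalize hw : π ω = w at h
  induction h generalizing ω with
  | refl => exact ⟨ω, .refl ω, hw⟩
  | tail _ h_step ih =>
    obtain ⟨t, ht, rfl⟩ := h_step
    rw [← hw] at ht
    obtain ⟨j, -, h_exch⟩ := ht.exists_eraseIdx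
    obtain ⟨ω', h_sub, rfl⟩ := ih (ω := ω.eraseIdx j) (by rw [← h_exch, hw])
    exact ⟨ω', h_sub.trans (List.eraseIdx_sublist ω j), rfl⟩

variable (cs) in
theorem bruhatLE_iff_bruhatChain {u w : W} : cs.bruhatLE u w ↔ cs.BruhatChain u w := by
  constructor
  · rintro ⟨ω, ω', hω, rfl, h, rfl⟩
    exact cs.bruhatChain_of_sublist h hω
  · intro h
    obtain ⟨ω, hω, rfl⟩ := cs.exists_isReduced w
    obtain ⟨ω', h_sub, rfl⟩ := h.exists_sublist
    exact ⟨ω, ω', hω, rfl, h_sub, rfl⟩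

variable (cs) in
theorem bruhatLE_antisymm {u w : W} (h : cs.bruhatLE u w) (h' : cs.bruhatLE w u) : u = w :=
  ((cs.bruhatLE_iff_bruhatChain).1 h).antisymm ((cs.bruhatLE_iff_bruhatChain).1 h')

end BruhatChain

section Demazure

/-- The Demazure product `sᵢ₁ ∗ ⋯ ∗ sᵢₖ` of the letters of a word. -/
noncomputable def demazureWord (ω : List B) : W :=
  ω.foldr cs.simpleDemazure 1

theorem simpleDemazure_wordProd_of_isReduced {i : B} {ω : List B} (h : cs.IsReduced (i :: ω)) :
    cs.simpleDemazure i (π ω) = π (i :: ω) := by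
  rw [simpleDemazure_of_length_lt cs h.length_lt_simple_mul, wordProd_cons]

theorem demazureWord_of_isReduced {ω : List B} (hω : cs.IsReduced ω) :
    cs.demazureWord ω = π ω := by
  induction ω with
  | nil => rfl
  | cons i ω ih =>
    rw [demazureWord, List.foldr_cons, ← demazureWord, ih hω.of_cons,
      simpleDemazure_wordProd_of_isReduced cs hω]

theorem foldr_simpleDemazure_of_isReduced {star : W → W → W} (hstar_one : ∀ w, star 1 w = w)
    (hstar_simple : ∀ i w, star (σ i) w = cs.simpleDemazure i w)
    (hstar_assoc : ∀ a b c, star (star a b) c = star a (star b c))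
    {ω : List B} (hω : cs.IsReduced ω) (y : W) :
    ω.foldr cs.simpleDemazure y = star (π ω) y := by
  induction ω with
  | nil => rw [List.foldr_nil, wordProd_nil, hstar_one]
  | cons i ω ih =>
    rw [List.foldr_cons, ih hω.of_cons, ← simpleDemazure_wordProd_of_isReduced cs hω,
      ← hstar_simple, ← hstar_simple, hstar_assoc]

theorem exists_sublist_wordProd_eq_demazureWord (ω : List B) :
    ∃ ω', ω' <+ ω ∧ π ω' = cs.demazureWord ω := by
  induction ω with
  | nil => exact ⟨[], .slnil, rfl⟩
  | cons i ω ih =>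
    obtain ⟨ω', h_sub, h_eq⟩ := ih
    rw [demazureWord, List.foldr_cons, ← demazureWord, ← h_eq]
    rcases cs.length_lt_or_gt_simple_mul i (π ω') with h | h
    · rw [simpleDemazure_of_length_lt cs h, ← wordProd_cons]
      exact ⟨i :: ω', h_sub.cons_cons i, rfl⟩
    · rw [simpleDemazure_of_length_gt cs h]
      exact ⟨ω', h_sub.cons i, rfl⟩

theorem bruhatChain_demazureWord_of_sublist {ω' ω : List B} (h : ω' <+ ω) :
    cs.BruhatChain (π ω') (cs.demazureWord ω) := by
  induction h with
  | slnil => exact .refl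
  | cons i _ ih => exact ih.trans (cs.bruhatChain_simpleDemazure i _)
  | cons_cons i _ ih =>
    rw [wordProd_cons]
    exact ih.simple_mul_simpleDemazure i

theorem wordProd_mem_prodSet {ω τ l : List B} (hω : cs.IsReduced ω) (hτ : cs.IsReduced τ)
    (h : l <+ ω ++ τ) : π l ∈ cs.prodSet (π ω) (π τ) := by
  obtain ⟨l₁, l₂, rfl, h₁, h₂⟩ := List.sublist_append_iff.mp h
  exact ⟨π l₁, π l₂, ⟨ω, l₁, hω, rfl, h₁, rfl⟩, ⟨τ, l₂, hτ, rfl, h₂, rfl⟩, wordProd_append ..⟩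

theorem bruhatLE_demazureWord_of_mem_prodSet {ω τ : List B} {z : W}
    (hz : z ∈ cs.prodSet (π ω) (π τ)) : cs.bruhatLE z (cs.demazureWord (ω ++ τ)) := by
  obtain ⟨u, v, hu, hv, rfl⟩ := hz
  obtain ⟨a, ha, rfl⟩ := ((cs.bruhatLE_iff_bruhatChain).1 hu).exists_sublist
  obtain ⟨b, hb, rfl⟩ := ((cs.bruhatLE_iff_bruhatChain).1 hv).exists_sublist
  rw [bruhatLE_iff_bruhatChain, ← wordProd_append]
  exact cs.bruhatChain_demazureWord_of_sublist (ha.append hb)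

end Demazure

end CoxeterSystem

/-- The Demazure product `x ∗ y` is the unique maximal element (in Bruhat order) of the set
`{u * v : u ≤ x, v ≤ y}`. -/
theorem demazure_eq_unique_max_of_prodSet {B W : Type*} [Group W] {M : CoxeterMatrix B} (cs : CoxeterSystem M W)
    (star : W → W → W)
    (hstar_one : ∀ w : W, star 1 w = w)
    (hstar_simple : ∀ (i : B) (w : W), star (cs.simple i) w =
      if cs.length w < cs.length (cs.simple i * w) then cs.simple i * w else w)
    (hstar_assoc : ∀ a b c : W, star (star a b) c = star a (star b c))
    (x y : W) :
    (star x y ∈ cs.prodSet x y ∧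
      ∀ z ∈ cs.prodSet x y, cs.bruhatLE (star x y) z → z = star x y) ∧
    ∀ z ∈ cs.prodSet x y, (∀ z' ∈ cs.prodSet x y, cs.bruhatLE z z' → z' = z) →
      z = star x y := by
  obtain ⟨ω, hω, rfl⟩ := cs.exists_isReduced x
  obtain ⟨τ, hτ, rfl⟩ := cs.exists_isReduced y
  have h_star : star (cs.wordProd ω) (cs.wordProd τ) = cs.demazureWord (ω ++ τ) := by
    rw [CoxeterSystem.demazureWord, List.foldr_append, ← CoxeterSystem.demazureWord,
      cs.demazureWord_of_isReduced hτ,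
      cs.foldr_simpleDemazure_of_isReduced hstar_one hstar_simple hstar_assoc hω]
  have h_mem :
      star (cs.wordProd ω) (cs.wordProd τ) ∈ cs.prodSet (cs.wordProd ω) (cs.wordProd τ) := by
    obtain ⟨l, h_sub, h_eq⟩ := cs.exists_sublist_wordProd_eq_demazureWord (ω ++ τ)
    rw [h_star, ← h_eq]
    exact cs.wordProd_mem_prodSet hω hτ h_sub
  have h_max : ∀ z ∈ cs.prodSet (cs.wordProd ω) (cs.wordProd τ),
      cs.bruhatLE z (star (cs.wordProd ω) (cs.wordProd τ)) := fun z hz =>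
    h_star ▸ cs.bruhatLE_demazureWord_of_mem_prodSet hz
  exact ⟨⟨h_mem, fun z hz h => cs.bruhatLE_antisymm (h_max z hz) h⟩,
    fun z hz h => (h _ h_mem (h_max z hz)).symm⟩
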